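/- arXiv:math/0605494 — 6 statements merged into one kernel-verified Lean document; each statement's English description precedes it below -/
import Mathlib

section
/- If S is a set of monomials (in a polynomial ring, identified with their exponent vectors in ℕ^n) whose least common multiple is not equal to the least common multiple of any other subset of a fixed finite generating set G containing S, then for every v ∈ S, the set S \ {v} also has a unique least common multiple among subsets of G (i.e., no other subset T ⊆ G has lcm(T) = lcm(S \ {v})). -/
/-- The componentwise maximum (LCM of monomials identified with exponent vectors). -/
def lcmVec {n : ℕ} (S : Finset (Fin n → ℕ)) : Fin n → ℕ :=
  fun j => S.sup fun v => v j

/-- `S` has a unique LCM among subsets of `G`. -/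
def UniqueLcm {n : ℕ} (G S : Finset (Fin n → ℕ)) : Prop :=
  ∀ T ⊆ G, lcmVec T = lcmVec S → T = S

theorem unique_lcm_erase {n : ℕ} (G S : Finset (Fin n → ℕ)) (hSG : S ⊆ G)
    (hS : UniqueLcm G S) (v : Fin n → ℕ) (hv : v ∈ S) :
    UniqueLcm G (S.erase v) := by
  intro T hTG hT
  have hins : lcmVec (insert v T) = lcmVec S := by
    funext j
    have h1 : lcmVec (insert v T) j = max (v j) (lcmVec T j) := Finset.sup_insert
    have h2 : lcmVec S j = max (v j) (lcmVec (S.erase v) j) := by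
      conv_lhs => rw [← Finset.insert_erase hv]
      exact Finset.sup_insert
    rw [h1, h2, congrFun hT j]
  have hTS : insert v T = S :=
    hS _ (Finset.insert_subset (hSG hv) hTG) hins
  by_cases hvT : v ∈ T
  · exfalso
    have hTeq : T = S := by rwa [Finset.insert_eq_self.mpr hvT] at hTS
    have : S.erase v = S := hS _ (Finset.Subset.trans (Finset.erase_subset _ _) hSG)
      (by rw [← hT, hTeq])
    exact (Finset.notMem_erase v S) (by rw [this]; exact hv)
  · rw [← hTS, Finset.erase_insert hvT]
end

section
/- For a point x ∈ ℝ^d and points v_1, …, v_k ∈ ℝ^d, define c_i = min_j (x_j − (v_i)_j). Then x lies in the tropical convex hull of v_1, …, v_k (with max-plus operations) if and only if for every coordinate j, max_i (c_i + (v_i)_j) = x_j. -/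
/-- `x` is in the tropical (max-plus) convex hull of the points `v i`. -/
def InTropHull {k d : ℕ} [NeZero k] (v : Fin k → Fin d → ℝ) (x : Fin d → ℝ) : Prop :=
  ∃ lam : Fin k → ℝ, ∀ j, x j = Finset.univ.sup' Finset.univ_nonempty fun i => lam i + v i j

theorem mem_tropHull_iff {k d : ℕ} [NeZero k] [NeZero d]
    (v : Fin k → Fin d → ℝ) (x : Fin d → ℝ)
    (c : Fin k → ℝ)
    (hc : ∀ i, c i = Finset.univ.inf' Finset.univ_nonempty fun j => x j - v i j) :
    InTropHull v x ↔
      ∀ j, (Finset.univ.sup' Finset.univ_nonempty fun i => c i + v i j) = x j := by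
  have hcle : ∀ i j, c i + v i j ≤ x j := by
    intro i j
    have := Finset.inf'_le (f := fun j => x j - v i j) (Finset.mem_univ j)
    rw [hc i]; linarith
  constructor
  · rintro ⟨lam, hlam⟩ j
    apply le_antisymm
    · exact Finset.sup'_le _ _ fun i _ => hcle i j
    · rw [hlam j]
      apply Finset.sup'_le _ _ fun i _ => ?_
      have hlc : lam i ≤ c i := by
        rw [hc i]
        apply Finset.le_inf' _ _ fun j' _ => ?_
        have : lam i + v i j' ≤ x j' := by
          rw [hlam j']
          exact Finset.le_sup' (fun i => lam i + v i j') (Finset.mem_univ i)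
        linarith
      have : c i + v i j ≤ Finset.univ.sup' Finset.univ_nonempty fun i => c i + v i j :=
        Finset.le_sup' (fun i => c i + v i j) (Finset.mem_univ i)
      linarith
  · intro h
    exact ⟨c, fun j => (h j).symm⟩
end

section
/- With K the ordered field of Puiseux series with real exponents, every point x of the tropical convex hull of v_1, …, v_k ∈ ℝ^d is in the image under the coordinatewise degree map of the ordinary convex hull over K of any positive lifts V_1, …, V_k of the v_i. Concretely: given real scalars c_1, …, c_k with max_i c_i = 0 and x = max_i(c_i + v_i) coordinatewise, there exist elements γ_1, …, γ_k ∈ K with γ_i > 0, Σ γ_i = 1, deg(γ_i) = c_i, and deg(Σ γ_i V_i) = x coordinatewise. -/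
/-- The field of Hahn (generalized Puiseux) series over ℝ with real exponents. -/
abbrev K := HahnSeries ℝ ℝ

/-- The degree: the leading exponent (max-plus convention). -/
noncomputable def deg (x : K) : ℝ := -x.order

/-- Positivity in the ordered field `K`: positive leading coefficient. -/
def Kpos (x : K) : Prop := 0 < x.coeff x.order

/-!
Write `c⁺ = {i | c i = 0}` (nonempty, since `max c = 0`) and take `γ i = t^{c i}` for `c i < 0`;
the indices in `c⁺` share equally `1 - ∑_{c i < 0} t^{c i}`, which has degree `0` and positive
leading coefficient because every `t^{c i}` with `c i < 0` only involves positive exponents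
(the order of `t^a` is `-a`). All `γ i * V i j` then have positive leading coefficients, so no
cancellation can occur in `∑ i, γ i * V i j`: its order is the minimum of the orders, i.e. its
degree is `max_i (c i + v i j) = x j`.
-/

namespace HahnSeries

def PosOfOrder {Γ R : Type*} [LinearOrder Γ] [Zero Γ] [Zero R] [LT R] (r : Γ) (x : R⟦Γ⟧) :
    Prop :=
  x.order = r ∧ 0 < x.coeff r

section

variable {Γ R : Type*} [LinearOrder Γ] [Zero Γ]

theorem PosOfOrder.coeff_eq_zero_of_lt [Zero R] [LT R] {r s : Γ} {x : R⟦Γ⟧}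
    (hx : PosOfOrder r x) (hs : s < r) : x.coeff s = 0 :=
  coeff_eq_zero_of_lt_order (hx.1 ▸ hs)

theorem posOfOrder_of_coeff [Zero R] [Preorder R] {r : Γ} {x : R⟦Γ⟧} (hpos : 0 < x.coeff r)
    (hlt : ∀ s < r, x.coeff s = 0) : PosOfOrder r x := by
  have hx : x ≠ 0 := by
    rintro rfl
    exact lt_irrefl _ hpos
  have hle : r ≤ x.order := not_lt.1 fun h => hx (coeff_order_eq_zero.1 (hlt _ h))
  exact ⟨le_antisymm (order_le_of_coeff_ne_zero hpos.ne') hle, hpos⟩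

theorem posOfOrder_single [Zero R] [Preorder R] {r : Γ} {a : R} (ha : 0 < a) :
    PosOfOrder r (single r a) :=
  posOfOrder_of_coeff (by rwa [coeff_single_same]) fun _ hs => coeff_single_of_ne hs.ne

theorem PosOfOrder.smul [MulZeroClass R] [Preorder R] [PosMulStrictMono R] {r : Γ} {x : R⟦Γ⟧}
    {a : R} (ha : 0 < a) (hx : PosOfOrder r x) : PosOfOrder r (a • x) :=
  posOfOrder_of_coeff (by simpa only [coeff_smul, smul_eq_mul] using mul_pos ha hx.2)
    fun s hs => by
      rw [coeff_smul, hx.coeff_eq_zero_of_lt hs, smul_zero]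

theorem PosOfOrder.sub_of_coeff_eq_zero [AddGroup R] [Preorder R] {r : Γ} {x y : R⟦Γ⟧}
    (hx : PosOfOrder r x) (hy : ∀ s ≤ r, y.coeff s = 0) : PosOfOrder r (x - y) :=
  posOfOrder_of_coeff (by rw [coeff_sub, hy r le_rfl, sub_zero]; exact hx.2) fun s hs => by
    rw [coeff_sub, hy s hs.le, hx.coeff_eq_zero_of_lt hs, sub_zero]

theorem PosOfOrder.add [AddMonoid R] [Preorder R] [AddLeftStrictMono R] [AddRightStrictMono R]
    {r s : Γ} {x y : R⟦Γ⟧} (hx : PosOfOrder r x) (hy : PosOfOrder s y) :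
    PosOfOrder (min r s) (x + y) := by
  refine posOfOrder_of_coeff ?_ fun u hu => by
    rw [coeff_add, hx.coeff_eq_zero_of_lt (hu.trans_le (min_le_left r s)),
      hy.coeff_eq_zero_of_lt (hu.trans_le (min_le_right r s)), add_zero]
  rw [coeff_add]
  rcases lt_trichotomy r s with h | rfl | h
  · rw [min_eq_left h.le, hy.coeff_eq_zero_of_lt h, add_zero]
    exact hx.2
  · rw [min_self]
    exact add_pos hx.2 hy.2
  · rw [min_eq_right h.le, hx.coeff_eq_zero_of_lt h, zero_add]
    exact hy.2

theorem posOfOrder_finset_sum [AddCommMonoid R] [Preorder R] [AddLeftStrictMono R]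
    [AddRightStrictMono R] {ι : Type*} {s : Finset ι} (hs : s.Nonempty) {f : ι → R⟦Γ⟧}
    {r : ι → Γ} (h : ∀ i ∈ s, PosOfOrder (r i) (f i)) :
    PosOfOrder (s.inf' hs r) (∑ i ∈ s, f i) := by
  induction hs using Finset.Nonempty.cons_induction with
  | singleton i => simpa using h i (Finset.mem_singleton_self i)
  | cons i s _ hs ih =>
    rw [Finset.sum_cons, Finset.inf'_cons hs]
    exact (h i (Finset.mem_cons_self i s)).add (ih fun j hj => h j (Finset.mem_cons_of_mem hj))

end

theorem PosOfOrder.mul {Γ R : Type*} [AddCommMonoid Γ] [LinearOrder Γ]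
    [IsOrderedCancelAddMonoid Γ] [NonUnitalNonAssocSemiring R] [Preorder R] [PosMulStrictMono R]
    {r s : Γ} {x y : R⟦Γ⟧}
    (hx : PosOfOrder r x) (hy : PosOfOrder s y) : PosOfOrder (r + s) (x * y) := by
  have hlead : 0 < x.leadingCoeff * y.leadingCoeff := by
    rw [leadingCoeff_eq, leadingCoeff_eq, hx.1, hy.1]
    exact mul_pos hx.2 hy.2
  refine ⟨by rw [order_mul_of_ne_zero hlead.ne', hx.1, hy.1], ?_⟩
  rwa [← hx.1, ← hy.1, coeff_mul_order_add_order]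

end HahnSeries

open HahnSeries

theorem Finset.inf'_neg_eq_neg_sup' {ι α : Type*} [AddCommGroup α] [LinearOrder α]
    [IsOrderedAddMonoid α] {s : Finset ι} (hs : s.Nonempty) (f : ι → α) :
    s.inf' hs (fun i => -f i) = -s.sup' hs f := by
  induction hs using Finset.Nonempty.cons_induction with
  | singleton i => rfl
  | cons i s _ hs ih => rw [inf'_cons hs, sup'_cons hs, ih, neg_sup]

theorem posOfOrder_neg_iff {x : K} {a : ℝ} : PosOfOrder (-a) x ↔ Kpos x ∧ deg x = a := by
  unfold PosOfOrder Kpos deg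
  constructor
  · rintro ⟨hord, hpos⟩
    exact ⟨hord ▸ hpos, by rw [hord, neg_neg]⟩
  · rintro ⟨hpos, hdeg⟩
    have hord : x.order = -a := by rw [← hdeg, neg_neg]
    exact ⟨hord, hord ▸ hpos⟩

theorem exists_posOfOrder_sum_eq_one {ι : Type*} [Fintype ι] (c : ι → ℝ)
    (hc : ∀ i, c i ≤ 0) (hzero : ∃ i, c i = 0) :
    ∃ γ : ι → K, (∀ i, PosOfOrder (-c i) (γ i)) ∧ ∑ i, γ i = 1 := by
  classical
  set top := Finset.univ.filter fun i => c i = 0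
  have htop : 0 < (top.card : ℝ) := by
    obtain ⟨i, hi⟩ := hzero
    exact Nat.cast_pos.2 <|
      Finset.card_pos.2 ⟨i, Finset.mem_filter.2 ⟨Finset.mem_univ i, hi⟩⟩
  set tail : K := ∑ i ∈ Finset.univ.filter (fun i => ¬c i = 0), single (-c i) 1
  have htail : ∀ s ≤ (0 : ℝ), tail.coeff s = 0 := fun s hs => by
    rw [coeff_sum]
    refine Finset.sum_eq_zero fun i hi => coeff_single_of_ne fun h => ?_
    have := lt_of_le_of_ne (hc i) (Finset.mem_filter.1 hi).2
    linarith
  have hhead : PosOfOrder 0 ((top.card : ℝ)⁻¹ • (1 - tail)) :=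
    ((posOfOrder_single one_pos).sub_of_coeff_eq_zero htail).smul (inv_pos.2 htop)
  refine ⟨fun i => if c i = 0 then (top.card : ℝ)⁻¹ • (1 - tail) else single (-c i) 1,
    fun i => ?_, ?_⟩
  · dsimp only
    split_ifs with h
    · rwa [h, neg_zero]
    · exact posOfOrder_single one_pos
  · rw [Finset.sum_ite, Finset.sum_const, ← Nat.cast_smul_eq_nsmul ℝ, smul_smul,
      mul_inv_cancel₀ htop.ne', one_smul, sub_add_cancel]

theorem tropHull_point_lifts {k d : ℕ} [NeZero k]
    (v : Fin k → Fin d → ℝ) (V : Fin k → Fin d → K)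
    (hVpos : ∀ i j, Kpos (V i j)) (hVdeg : ∀ i j, deg (V i j) = v i j)
    (c : Fin k → ℝ) (hc : Finset.univ.sup' Finset.univ_nonempty c = 0)
    (x : Fin d → ℝ)
    (hx : ∀ j, x j = Finset.univ.sup' Finset.univ_nonempty fun i => c i + v i j) :
    ∃ γ : Fin k → K, (∀ i, Kpos (γ i)) ∧ (∑ i, γ i) = 1 ∧
      (∀ i, deg (γ i) = c i) ∧ (∀ j, deg (∑ i, γ i * V i j) = x j) := by
  have hmax : ∃ i, c i = 0 := by
    obtain ⟨i, -, hi⟩ := Finset.exists_mem_eq_sup' Finset.univ_nonempty c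
    exact ⟨i, hi.symm.trans hc⟩
  obtain ⟨γ, hγ, hsum⟩ :=
    exists_posOfOrder_sum_eq_one c (fun i => hc ▸ Finset.le_sup' c (Finset.mem_univ i)) hmax
  refine ⟨γ, fun i => (posOfOrder_neg_iff.1 (hγ i)).1, hsum,
    fun i => (posOfOrder_neg_iff.1 (hγ i)).2, fun j => ?_⟩
  have hterm : ∀ i ∈ Finset.univ, PosOfOrder (-(c i + v i j)) (γ i * V i j) := fun i _ => by
    rw [neg_add]
    exact (hγ i).mul (posOfOrder_neg_iff.2 ⟨hVpos i j, hVdeg i j⟩)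
  have hsumj := posOfOrder_finset_sum Finset.univ_nonempty hterm
  rw [Finset.inf'_neg_eq_neg_sup', ← hx j] at hsumj
  exact (posOfOrder_neg_iff.1 hsumj).2
end

section
/- Let f_1, …, f_d ∈ K be nonzero, let P = {i : f_i > 0} and N = {i : f_i < 0}, with both P and N nonempty. If X ∈ K^d has all coordinates positive and Σ_i f_i X_i ≥ 0, then deg(X) lies in the union of the closed sectors indexed by P: that is, max_{i ∈ P} (deg(X_i) + deg(f_i)) = max_{i=1..d} (deg(X_i) + deg(f_i)). -/
open scoped Classical

/-!
If the maximum `M` of `deg X_i + deg f_i` were attained only at indices with `f_i < 0`, then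
the coefficient of `∑ f_i X_i` in degree `M` would be a sum of nonpositive leading products, at
least one of them negative, while no term reaches a higher degree. So the sum would have degree `M`
and a negative leading coefficient, contradicting `∑ f_i X_i ≥ 0`.
-/

namespace HahnSeries

variable {Γ R : Type*} [LinearOrder Γ] [Zero Γ]

theorem order_eq_of_coeff_ne_zero [Zero R] {x : R⟦Γ⟧} {m : Γ} (hm : x.coeff m ≠ 0)
    (hlt : ∀ j < m, x.coeff j = 0) : x.order = m :=
  le_antisymm (order_le_of_coeff_ne_zero hm)
    ((le_order_iff_forall (ne_zero_of_coeff_ne_zero hm)).2 hlt)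

theorem leadingCoeff_sum_neg {ι : Type*} [AddCommMonoid R] [PartialOrder R]
    [IsOrderedCancelAddMonoid R] {s : Finset ι} {g : ι → R⟦Γ⟧} {m : Γ}
    (hle : ∀ i ∈ s, m ≤ (g i).order)
    (hneg : ∀ i ∈ s, (g i).order = m → (g i).leadingCoeff < 0)
    (hex : ∃ i ∈ s, (g i).order = m) :
    (∑ i ∈ s, g i).leadingCoeff < 0 := by
  have hcoeff : (∑ i ∈ s, g i).coeff m < 0 := by
    rw [coeff_sum]
    refine Finset.sum_neg' (fun i hi => ?_) ?_
    · rcases (hle i hi).eq_or_lt with h | h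
      · rw [h, ← leadingCoeff_eq]
        exact (hneg i hi h.symm).le
      · rw [coeff_eq_zero_of_lt_order h]
    · obtain ⟨i, hi, h⟩ := hex
      exact ⟨i, hi, by rw [← h, ← leadingCoeff_eq]; exact hneg i hi h⟩
  have horder : (∑ i ∈ s, g i).order = m :=
    order_eq_of_coeff_ne_zero hcoeff.ne fun j hj => by
      rw [coeff_sum]
      exact Finset.sum_eq_zero fun i hi => coeff_eq_zero_of_lt_order (hj.trans_le (hle i hi))
  rwa [leadingCoeff_eq, horder]

end HahnSeries

open HahnSeries

theorem order_eq_neg_deg (x : K) : x.order = -deg x :=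
  (neg_neg _).symm

theorem deg_mul {x y : K} (hx : x ≠ 0) (hy : y ≠ 0) : deg (x * y) = deg x + deg y := by
  rw [deg, order_mul hx hy, neg_add, ← deg, ← deg]

theorem kpos_iff_leadingCoeff_pos (x : K) : Kpos x ↔ 0 < x.leadingCoeff := by
  rw [leadingCoeff_eq, Kpos]

theorem Kpos.ne_zero {x : K} (hx : Kpos x) : x ≠ 0 := by
  rintro rfl
  simp [Kpos] at hx

theorem leadingCoeff_neg_of_not_kpos {x : K} (hx : x ≠ 0) (hpos : ¬Kpos x) :
    x.leadingCoeff < 0 :=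
  lt_of_le_of_ne (not_lt.1 (mt (kpos_iff_leadingCoeff_pos x).2 hpos))
    (leadingCoeff_ne_zero.2 hx)

theorem deg_mem_positive_sectors_general {d : ℕ} [NeZero d] (f : Fin d → K)
    (hf : ∀ i, f i ≠ 0)
    (hP : (Finset.univ.filter fun i => Kpos (f i)).Nonempty)
    (X : Fin d → K) (hX : ∀ i, Kpos (X i))
    (hsum : Kpos (∑ i, f i * X i) ∨ (∑ i, f i * X i) = 0) :
    (Finset.univ.filter fun i => Kpos (f i)).sup' hP
        (fun i => deg (X i) + deg (f i)) =
      Finset.univ.sup' Finset.univ_nonempty (fun i => deg (X i) + deg (f i)) := by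
  refine le_antisymm (Finset.sup'_mono _ (Finset.subset_univ _) hP) (not_lt.1 fun hlt => ?_)
  set M := Finset.univ.sup' Finset.univ_nonempty (fun i => deg (X i) + deg (f i))
  have horder (i) : (f i * X i).order = -(deg (X i) + deg (f i)) := by
    rw [order_eq_neg_deg, deg_mul (hf i) (hX i).ne_zero, add_comm]
  have hneg : (∑ i, f i * X i).leadingCoeff < 0 := by
    refine leadingCoeff_sum_neg (m := -M) (fun i _ => ?_) (fun i _ hi => ?_) ?_
    · rw [horder, neg_le_neg_iff]
      exact Finset.le_sup' (fun i => deg (X i) + deg (f i)) (Finset.mem_univ i)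
    · have hnotP : ¬Kpos (f i) := fun hpos => by
        have hiP : i ∈ Finset.univ.filter fun i => Kpos (f i) :=
          Finset.mem_filter.2 ⟨Finset.mem_univ i, hpos⟩
        have := Finset.le_sup' (fun i => deg (X i) + deg (f i)) hiP
        rw [horder, neg_inj] at hi
        linarith
      rw [leadingCoeff_mul]
      exact mul_neg_of_neg_of_pos (leadingCoeff_neg_of_not_kpos (hf i) hnotP)
        ((kpos_iff_leadingCoeff_pos _).1 (hX i))
    · obtain ⟨i, -, hi⟩ := Finset.exists_mem_eq_sup' Finset.univ_nonempty
        (fun i => deg (X i) + deg (f i))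
      exact ⟨i, Finset.mem_univ i, by rw [horder, ← hi]⟩
  rcases hsum with hpos | hzero
  · exact hneg.not_gt ((kpos_iff_leadingCoeff_pos _).1 hpos)
  · rw [hzero, leadingCoeff_zero] at hneg
    exact hneg.false

theorem deg_mem_positive_sectors {d : ℕ} [NeZero d] (f : Fin d → K)
    (hf : ∀ i, f i ≠ 0)
    (hP : (Finset.univ.filter fun i => Kpos (f i)).Nonempty)
    (hN : (Finset.univ.filter fun i => Kpos (-(f i))).Nonempty)
    (X : Fin d → K) (hX : ∀ i, Kpos (X i))
    (hsum : Kpos (∑ i, f i * X i) ∨ (∑ i, f i * X i) = 0) :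
    (Finset.univ.filter fun i => Kpos (f i)).sup' hP
        (fun i => deg (X i) + deg (f i)) =
      Finset.univ.sup' Finset.univ_nonempty (fun i => deg (X i) + deg (f i)) :=
  deg_mem_positive_sectors_general f hf hP X hX hsum
end

section
/- Conversely to the previous statement: let f_1, …, f_d ∈ K be nonzero with P = {i : f_i > 0} nonempty, and let z ∈ ℝ^d satisfy max_{i ∈ P}(z_i + deg f_i) = max_i (z_i + deg f_i). Then there exists X ∈ K^d with all coordinates positive, deg(X_i) = z_i for all i, and Σ_i f_i X_i > 0. -/
open scoped Classical

/-!
Let `M = maxᵢ (zᵢ + deg fᵢ)` and take monomials `Xⱼ = cⱼ t^{zⱼ}` with `cⱼ > 0` (as `deg = -order`,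
the monomial `c t^z` is `single (-z) c`). Every product `fⱼ Xⱼ` has degree at most `M`, and the
coefficient of `t^M` in `∑ fⱼ Xⱼ` is the linear form `∑ aⱼ cⱼ`, where `aⱼ` is the coefficient of
`fⱼ` at `t^{M - zⱼ}`. By hypothesis some `fᵢ` with positive leading coefficient attains the maximum,
so `aᵢ > 0`, and making `cᵢ` large while the other `cⱼ` are `1` makes this form positive; it is then
the leading coefficient of the sum.
-/

theorem exists_pos_sum_mul_pos {ι 𝕜 : Type*} [Fintype ι] [DecidableEq ι] [Field 𝕜] [LinearOrder 𝕜]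
    [IsStrictOrderedRing 𝕜] (a : ι → 𝕜) {i : ι} (hi : 0 < a i) :
    ∃ c : ι → 𝕜, (∀ j, 0 < c j) ∧ 0 < ∑ j, a j * c j := by
  set S := ∑ j ∈ Finset.univ.erase i, a j
  set c : ι → 𝕜 := fun j => if j = i then (|S| + 1) / a i else 1
  refine ⟨c, fun j => ?_, ?_⟩
  · by_cases hj : j = i <;> simp only [c, hj, if_true, if_false] <;> positivity
  · have hrest : ∑ j ∈ Finset.univ.erase i, a j * c j = S :=
      Finset.sum_congr rfl fun j hj => by simp [c, Finset.ne_of_mem_erase hj]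
    rw [← Finset.add_sum_erase _ _ (Finset.mem_univ i), hrest]
    simp only [c, if_true, mul_div_cancel₀ _ hi.ne']
    linarith [neg_abs_le S]

namespace HahnSeries

theorem order_eq_of_coeff_ne_zero_of_forall_lt {Γ R : Type*} [Zero Γ] [LinearOrder Γ] [Zero R]
    {x : HahnSeries Γ R} {a : Γ} (ha : x.coeff a ≠ 0) (hlt : ∀ b < a, x.coeff b = 0) :
    x.order = a := by
  refine le_antisymm (order_le_of_coeff_ne_zero ha) (not_lt.1 fun h => ?_)
  exact coeff_order_eq_zero.not.2 (ne_zero_of_coeff_ne_zero ha) (hlt _ h)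

variable {Γ R ι : Type*} [AddCommGroup Γ] [LinearOrder Γ] [IsOrderedAddMonoid Γ] [Semiring R]

theorem coeff_sum_mul_single_neg (s : Finset ι) (f : ι → HahnSeries Γ R) (z : ι → Γ)
    (r : ι → R) (b : Γ) :
    (∑ j ∈ s, f j * single (-z j) (r j)).coeff b = ∑ j ∈ s, (f j).coeff (b + z j) * r j := by
  rw [coeff_sum]
  refine Finset.sum_congr rfl fun j _ => ?_
  simpa using coeff_mul_single_add (x := f j) (a := b + z j) (b := -z j) (r := r j)

theorem order_sum_mul_single_neg {s : Finset ι} {f : ι → HahnSeries Γ R} {z : ι → Γ}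
    {r : ι → R} {m : Γ} (hm : ∀ j ∈ s, m + z j ≤ (f j).order)
    (hne : ∑ j ∈ s, (f j).coeff (m + z j) * r j ≠ 0) :
    (∑ j ∈ s, f j * single (-z j) (r j)).order = m := by
  refine order_eq_of_coeff_ne_zero_of_forall_lt (by rwa [coeff_sum_mul_single_neg]) fun b hb => ?_
  rw [coeff_sum_mul_single_neg]
  refine Finset.sum_eq_zero fun j hj => ?_
  rw [coeff_eq_zero_of_lt_order ((add_lt_add_left hb _).trans_le (hm j hj)), zero_mul]

end HahnSeries

open HahnSeries

theorem kpos_single {a r : ℝ} (hr : 0 < r) : Kpos (single a r) := by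
  simpa [Kpos, order_single hr.ne'] using hr

theorem deg_single {a r : ℝ} (hr : r ≠ 0) : deg (single a r) = -a := by
  simp [deg, order_single hr]

theorem exists_positive_lift_in_halfspace_general {d : ℕ} [NeZero d] (f : Fin d → K)
    (hP : (Finset.univ.filter fun i => Kpos (f i)).Nonempty)
    (z : Fin d → ℝ)
    (hz : (Finset.univ.filter fun i => Kpos (f i)).sup' hP
            (fun i => z i + deg (f i)) =
          Finset.univ.sup' Finset.univ_nonempty (fun i => z i + deg (f i))) :
    ∃ X : Fin d → K, (∀ i, Kpos (X i)) ∧ (∀ i, deg (X i) = z i) ∧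
      Kpos (∑ i, f i * X i) := by
  set M := Finset.univ.sup' Finset.univ_nonempty fun i => z i + deg (f i)
  have hle : ∀ j, z j + deg (f j) ≤ M := fun j =>
    Finset.le_sup' (fun i => z i + deg (f i)) (Finset.mem_univ j)
  obtain ⟨i, hiP, hiM⟩ := Finset.exists_mem_eq_sup' hP fun i => z i + deg (f i)
  have hi_order : -M + z i = (f i).order := by
    rw [← hz, hiM, deg]
    ring
  obtain ⟨c, hc, hsum⟩ := exists_pos_sum_mul_pos (fun j => (f j).coeff (-M + z j)) (i := i)
    (by rw [hi_order]; exact (Finset.mem_filter.mp hiP).2)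
  have hord : (∑ j, f j * single (-z j) (c j)).order = -M :=
    order_sum_mul_single_neg
      (fun j _ => by linarith [hle j, show deg (f j) = -(f j).order from rfl])
      hsum.ne'
  refine ⟨fun j => single (-z j) (c j), fun j => kpos_single (hc j),
    fun j => by rw [deg_single (hc j).ne', neg_neg], ?_⟩
  rw [Kpos, hord, coeff_sum_mul_single_neg]
  exact hsum

theorem exists_positive_lift_in_halfspace {d : ℕ} [NeZero d] (f : Fin d → K)
    (hf : ∀ i, f i ≠ 0)
    (hP : (Finset.univ.filter fun i => Kpos (f i)).Nonempty)
    (z : Fin d → ℝ)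
    (hz : (Finset.univ.filter fun i => Kpos (f i)).sup' hP
            (fun i => z i + deg (f i)) =
          Finset.univ.sup' Finset.univ_nonempty (fun i => z i + deg (f i))) :
    ∃ X : Fin d → K, (∀ i, Kpos (X i)) ∧ (∀ i, deg (X i) = z i) ∧
      Kpos (∑ i, f i * X i) :=
  exists_positive_lift_in_halfspace_general f hP z hz
end

section
/- Let P ⊆ ℝ^d (modulo the all-ones vector) be a tropical polytope and suppose in some direction the closed sector criterion for extremality holds at v, namely there exists an index i such that for all x ∈ P, x ≠ v (mod all-ones), one has x_i − v_i < max_j (x_j − v_j). Then v is not a tropical combination of points of P \ {v}: there are no points w_1, …, w_m ∈ P, all distinct from v modulo the all-ones vector, and scalars λ_1, …, λ_m with max_r (λ_r + w_r) = v coordinatewise. -/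
/-- `x` and `y` agree modulo the all-ones vector. -/
def ProjEq {d : ℕ} (x y : Fin d → ℝ) : Prop := ∃ c : ℝ, x = fun j => c + y j

theorem sector_criterion_extreme {d : ℕ} [NeZero d]
    (P : Set (Fin d → ℝ)) (v : Fin d → ℝ)
    (h : ∃ i : Fin d, ∀ x ∈ P, ¬ ProjEq x v →
      x i - v i < Finset.univ.sup' Finset.univ_nonempty fun j => x j - v j) :
    ¬ ∃ (m : ℕ) (w : Fin (m + 1) → Fin d → ℝ) (lam : Fin (m + 1) → ℝ),
        (∀ r, w r ∈ P ∧ ¬ ProjEq (w r) v) ∧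
        (∀ j, (Finset.univ.sup' Finset.univ_nonempty fun r => lam r + w r j) = v j) := by
  obtain ⟨i, hi⟩ := h
  rintro ⟨m, w, lam, hw, hsup⟩
  -- the sup at coordinate i is attained by some r
  obtain ⟨r, -, hr⟩ := Finset.exists_mem_eq_sup' (Finset.univ_nonempty)
    (fun r : Fin (m + 1) => lam r + w r i)
  have hri : lam r + w r i = v i := by rw [← hsup i, hr]
  have hlt := hi (w r) (hw r).1 (hw r).2
  obtain ⟨j, -, hj⟩ := Finset.exists_mem_eq_sup' (Finset.univ_nonempty)
    (fun j : Fin d => w r j - v j)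
  rw [hj] at hlt
  have hle : lam r + w r j ≤ v j := by
    rw [← hsup j]
    exact Finset.le_sup' (fun r => lam r + w r j) (Finset.mem_univ r)
  linarith
end
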